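/- arXiv:1611.05979 — 3 statements merged into one kernel-verified Lean document; each statement's English description precedes it below -/
import Mathlib

section
/- For any full-rank lattice L in R^n, there is a map psi_L : R^n -> V(L) with ||psi_L(x)|| <= ||x|| for all x, such that for every fundamental body K of L, psi_L restricted to the interior of K is injective and volume-preserving. -/
open scoped Real Pointwise
open MeasureTheory Set

noncomputable section

variable {E : Type*} [NormedAddCommGroup E] [InnerProductSpace ℝ E]

/-- `A` is (the point set of) a lattice of some rank `d` with determinant `v`,
computed as `sqrt (det (Bᵀ B))` for a `ℤ`-basis `b` that is `ℝ`-linearly independent. -/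
def latHasDet (A : Set E) (v : ℝ) : Prop :=
  ∃ (d : ℕ) (b : Fin d → E), LinearIndependent ℝ b ∧
    A = (Submodule.span ℤ (Set.range b) : Set E) ∧
    v = Real.sqrt (Matrix.det (Matrix.of fun i j : Fin d => (inner ℝ (b i) (b j) : ℝ)))

/-- `L` is a lattice of rank `d` : it is generated over `ℤ` by `d` 
`ℝ`-linearly independent vectors. -/
def IsLatticeOfRank (L : Submodule ℤ E) (d : ℕ) : Prop :=
  ∃ b : Fin d → E, LinearIndependent ℝ b ∧ L = Submodule.span ℤ (Set.range b)

/-- Gaussian mass of a set `A` with parameter `s`. -/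
def rhoS (s : ℝ) (A : Set E) : ℝ := ∑' x : A, Real.exp (-π * ‖(x : E)‖ ^ 2 / s ^ 2)

/-- A lattice (given by its point set) is stable if it has determinant one and every
sublattice has determinant at least one. -/
def IsStable (A : Set E) : Prop :=
  latHasDet A 1 ∧
    ∀ M : Submodule ℤ E, (M : Set E) ⊆ A → ∀ v, latHasDet (M : Set E) v → 1 ≤ v

/-- The Voronoi cell of a lattice. -/
def voronoi (L : Submodule ℤ E) : Set E := {x | ∀ y ∈ L, ‖x‖ ≤ ‖y - x‖}

/-- The covering radius of a lattice: the furthest distance from a point of the span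
of the lattice to the lattice. -/
def covRad (L : Submodule ℤ E) : ℝ :=
  ⨆ t : Submodule.span ℝ (L : Set E), ⨅ y : L, ‖(t : E) - (y : E)‖

/-- The dual lattice, as a set. -/
def dualSet (L : Submodule ℤ E) : Set E :=
  {w | ∀ y ∈ L, ∃ k : ℤ, (inner ℝ w y : ℝ) = (k : ℝ)}

/-- The Gaussian measure of `S/s`. -/
def gauss {n : ℕ} (s : ℝ) (S : Set (EuclideanSpace ℝ (Fin n))) : ℝ :=
  ∫ x in s⁻¹ • S, Real.exp (-π * ‖x‖ ^ 2)

/-- A fundamental body for a lattice with point set `L`: a convex body `K` such that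
`K + L` tiles space, i.e. `vol K = det L` and the interior of `K` is disjoint from every
nontrivial lattice translate of `K`. -/
def IsFundBody {n : ℕ} (L : Set (EuclideanSpace ℝ (Fin n)))
    (K : Set (EuclideanSpace ℝ (Fin n))) : Prop :=
  Convex ℝ K ∧ IsCompact K ∧ (interior K).Nonempty ∧
    (∀ y ∈ L, y ≠ 0 → interior K ∩ ((fun x => x + y) '' K) = ∅) ∧
    ∀ v, latHasDet L v → volume K = ENNReal.ofReal v

/-- Concatenation of Euclidean vectors. -/
def appendE {n m : ℕ} (x : EuclideanSpace ℝ (Fin n)) (y : EuclideanSpace ℝ (Fin m)) :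
    EuclideanSpace ℝ (Fin (n + m)) :=
  WithLp.toLp 2 fun i => Fin.addCases (motive := fun _ => ℝ) (fun j => x j) (fun j => y j) i

/-!
Let `c x` be a lattice point nearest to `x` and `ψ x = x - c x`. Then `ψ x` lies in the Voronoi
cell, and `‖ψ x‖ ≤ ‖x‖` because `0 ∈ L`. If `ψ a = ψ b`, then `a` is the translate of `b` by the
lattice vector `c a - c b`, so for `a, b` in the interior of a fundamental body the tiling
property forces `a = b`. Finally `ψ` is a translation on each of the countably many measurable
pieces where `c` is constant, so it preserves the volume of every measurable set on which it is
injective.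
-/

open Function

section NearestIndex

open Classical

variable {X : Type*} [PseudoMetricSpace X] [ProperSpace X]

theorem exists_forall_dist_le_of_isClosed_range (e : ℕ → X) (he : IsClosed (range e)) (x : X) :
    ∃ k, ∀ j, dist x (e k) ≤ dist x (e j) := by
  obtain ⟨_, ⟨k, rfl⟩, hk⟩ := he.exists_infDist_eq_dist (range_nonempty e) x
  exact ⟨k, fun j => hk ▸ Metric.infDist_le_dist_of_mem (mem_range_self j)⟩

/-- Taking the *first* nearest term of an enumeration makes the nearest-point choice
measurable. -/
def nearestIndex (e : ℕ → X) (he : IsClosed (range e)) (x : X) : ℕ :=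
  Nat.find (exists_forall_dist_le_of_isClosed_range e he x)

variable (e : ℕ → X) (he : IsClosed (range e))

theorem dist_nearestIndex_le (x : X) (j : ℕ) : dist x (e (nearestIndex e he x)) ≤ dist x (e j) :=
  Nat.find_spec (exists_forall_dist_le_of_isClosed_range e he x) j

theorem measurable_nearestIndex [MeasurableSpace X] [OpensMeasurableSpace X] :
    Measurable (nearestIndex e he) := by
  let nearest (k : ℕ) : Set X := ⋂ j, {x | dist x (e k) ≤ dist x (e j)}
  have hnearest (k : ℕ) : MeasurableSet (nearest k) :=
    (isClosed_iInter fun j => isClosed_le (continuous_id.dist continuous_const)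
      (continuous_id.dist continuous_const)).measurableSet
  refine measurable_to_countable' fun k => ?_
  have hpre : nearestIndex e he ⁻¹' {k} = nearest k ∩ ⋂ j < k, (nearest j)ᶜ := by
    ext x
    simp only [mem_preimage, mem_singleton_iff, nearestIndex, Nat.find_eq_iff]
    simp [nearest]
  rw [hpre]
  exact (hnearest k).inter (.biInter (to_countable _) fun j _ => (hnearest j).compl)

end NearestIndex

theorem measure_image_eq_of_injOn_of_piecewise_add {G ι : Type*} [AddGroup G] [MeasurableSpace G]
    [MeasurableAdd G] [Countable ι] [MeasurableSpace ι] [MeasurableSingletonClass ι]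
    (μ : Measure G) [μ.IsAddRightInvariant] {f : G → G} {idx : G → ι} (hidx : Measurable idx)
    (t : ι → G) (hf : ∀ x, f x = x + t (idx x)) {A : Set G} (hA : MeasurableSet A)
    (hinj : InjOn f A) : μ (f '' A) = μ A := by
  set P : ι → Set G := fun k => A ∩ idx ⁻¹' {k}
  have hPA : A = ⋃ k, P k := by ext x; simp [P]
  have hPm (k : ι) : MeasurableSet (P k) := hA.inter (hidx (measurableSet_singleton k))
  have hPd : Pairwise (Disjoint on P) := fun i j hij =>
    ((disjoint_singleton.2 hij).preimage idx).mono inter_subset_right inter_subset_right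
  have hfP (k : ι) : f '' P k = (fun x => x + -t k) ⁻¹' P k := by
    rw [← image_add_right]
    exact image_congr fun x hx => by rw [hf, hx.2]
  have hfPd : Pairwise (Disjoint on fun k => f '' P k) := fun i j hij => by
    rw [onFun, disjoint_iff_inter_eq_empty,
      ← hinj.image_inter inter_subset_left inter_subset_left,
      disjoint_iff_inter_eq_empty.1 (hPd hij), image_empty]
  calc μ (f '' A) = μ (⋃ k, f '' P k) := by rw [← image_iUnion, ← hPA]
    _ = ∑' k, μ (P k) := by
      rw [measure_iUnion hfPd fun k => hfP k ▸ measurable_add_const _ (hPm k)]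
      simp only [hfP, measure_preimage_add_right]
    _ = μ A := by rw [← measure_iUnion hPd hPm, ← hPA]

theorem injOn_sub_of_inter_add_image_eq_empty {G : Type*} [AddCommGroup G] (L : AddSubgroup G)
    {s t : Set G} (hst : s ⊆ t) (hL : ∀ y ∈ L, y ≠ 0 → s ∩ (fun x => x + y) '' t = ∅)
    {c : G → G} (hc : ∀ x, c x ∈ L) : InjOn (fun x => x - c x) s := by
  intro a ha b hb (hab : a - c a = b - c b)
  by_contra hne
  have hy : c a - c b ≠ 0 := fun h => hne <| by
    rw [sub_eq_zero] at h
    simpa [h] using hab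
  have hmem : a ∈ s ∩ (fun x => x + (c a - c b)) '' t := by
    refine ⟨ha, b, hst hb, ?_⟩
    calc b + (c a - c b) = (b - c b) + c a := by abel
      _ = a := by rw [← hab]; abel
  rw [hL _ (L.sub_mem (hc a) (hc b)) hy] at hmem
  exact hmem

theorem sub_mem_voronoi_of_forall_dist_le {V : Type*} [NormedAddCommGroup V]
    {L : Submodule ℤ V} {x c : V} (hc : c ∈ L)
    (hmin : ∀ z ∈ L, dist x c ≤ dist x z) : x - c ∈ voronoi L := fun y hy => by
  calc ‖x - c‖ = dist x c := (dist_eq_norm x c).symm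
    _ ≤ dist x (c + y) := hmin _ (L.add_mem hc hy)
    _ = ‖y - (x - c)‖ := by rw [dist_eq_norm, ← norm_neg]; congr 1; abel

theorem IsLatticeOfRank.countable {L : Submodule ℤ E} {d : ℕ} (hL : IsLatticeOfRank L d) :
    (L : Set E).Countable := by
  obtain ⟨b, -, rfl⟩ := hL
  exact countable_coe_iff.1 (inferInstanceAs (Countable (Submodule.span ℤ (range b))))

theorem IsLatticeOfRank.isClosed [FiniteDimensional ℝ E] {L : Submodule ℤ E}
    (hL : IsLatticeOfRank L (Module.finrank ℝ E)) : IsClosed (L : Set E) := by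
  obtain ⟨b, hb, rfl⟩ := hL
  let B : Module.Basis (Fin (Module.finrank ℝ E)) ℝ E :=
    .mk hb (hb.span_eq_top_of_card_eq_finrank' (by simp)).ge
  rw [← Module.Basis.coe_mk (v := b) hb]
  exact AddSubgroup.isClosed_of_discrete (H := (Submodule.span ℤ (range B)).toAddSubgroup)

/-- There is a norm-nonincreasing map into the Voronoi cell which is
injective and volume-preserving on the interior of any fundamental body. -/
theorem exists_voronoi_reduction_map {n : ℕ}
    (L : Submodule ℤ (EuclideanSpace ℝ (Fin n))) (hL : IsLatticeOfRank L n) :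
    ∃ ψ : EuclideanSpace ℝ (Fin n) → EuclideanSpace ℝ (Fin n),
      (∀ x, ψ x ∈ voronoi L) ∧ (∀ x, ‖ψ x‖ ≤ ‖x‖) ∧
      ∀ K : Set (EuclideanSpace ℝ (Fin n)),
        IsFundBody (L : Set (EuclideanSpace ℝ (Fin n))) K →
          Set.InjOn ψ (interior K) ∧
          ∀ A ⊆ interior K, MeasurableSet A → volume (ψ '' A) = volume A := by
  obtain ⟨e, hLe⟩ := hL.countable.exists_eq_range ⟨0, L.zero_mem⟩
  have he : IsClosed (range e) := by
    rw [← hLe]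
    exact IsLatticeOfRank.isClosed (by simpa using hL)
  set c := fun x => e (nearestIndex e he x)
  have hcL (x) : c x ∈ L := by
    rw [← SetLike.mem_coe, hLe]
    exact mem_range_self _
  have hmin (x) : ∀ z ∈ L, dist x (c x) ≤ dist x z := fun z hz => by
    obtain ⟨j, rfl⟩ : z ∈ range e := hLe ▸ hz
    exact dist_nearestIndex_le e he x j
  refine ⟨fun x => x - c x, fun x => sub_mem_voronoi_of_forall_dist_le (hcL x) (hmin x),
    fun x => by simpa [dist_eq_norm] using hmin x 0 L.zero_mem, fun K hK => ?_⟩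
  obtain ⟨-, -, -, hK, -⟩ := hK
  have hinj : InjOn (fun x => x - c x) (interior K) :=
    injOn_sub_of_inter_add_image_eq_empty L.toAddSubgroup interior_subset hK hcL
  exact ⟨hinj, fun A hAK hA => measure_image_eq_of_injOn_of_piecewise_add volume
    (measurable_nearestIndex e he) (fun k => -e k) (fun x => sub_eq_add_neg _ _) hA
    (hinj.mono hAK)⟩
end
end

section
/- For any non-decreasing measurable function f : R -> R, any full-rank lattice L in R^n, and any fundamental body K of L, the integral of f(||x||) over the Voronoi cell V(L) is at most the integral of f(||x||) over K. -/
open scoped Real Pointwise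
open MeasureTheory Set

noncomputable section

variable {E : Type*} [NormedAddCommGroup E] [InnerProductSpace ℝ E]

/-! Both the Voronoi cell `V` and the fundamental body `K` are fundamental domains of `L`: `K`
because its translates pack and it has the covolume of `L` as volume. Cutting `V` into the pieces
`V ∩ (γ + K)` and moving each piece by `-γ` reassembles `K`. A point of `V` is at least as close to
`0` as every point of its orbit, so for nondecreasing `f` this rearrangement can only increase the
integral of `f ‖x‖`. -/

open scoped ENNReal

namespace MeasureTheory

namespace IsAddFundamentalDomain

open Function

variable {G α : Type*} [AddGroup G] [Countable G] [AddAction G α] [MeasurableSpace α]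
  [MeasurableConstVAdd G α] {μ : Measure α} [VAddInvariantMeasure G α μ] {s t : Set α}

theorem of_pairwise_aedisjoint_of_measure_eq (hs : IsAddFundamentalDomain G s μ)
    (hs_fin : μ s ≠ ∞) (ht : NullMeasurableSet t μ)
    (ht_disj : Pairwise (AEDisjoint μ on fun g : G => g +ᵥ t)) (hμ : μ t = μ s) :
    IsAddFundamentalDomain G t μ where
  nullMeasurableSet := ht
  aedisjoint := ht_disj
  ae_covers := by
    set U := ⋃ g : G, (g +ᵥ t) ∩ s
    have hU : NullMeasurableSet U μ :=
      .iUnion fun g => (ht.vadd g).inter hs.nullMeasurableSet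
    have hμU : μ U = μ s := by
      rw [measure_iUnion₀ (fun g g' h => (ht_disj h).mono inter_subset_left inter_subset_left)
        fun g => (ht.vadd g).inter hs.nullMeasurableSet, ← hs.measure_eq_tsum, hμ]
    have hsU : μ (s \ U) = 0 := by
      rw [measure_sdiff (iUnion_subset fun _ => inter_subset_right) hU (hμU ▸ hs_fin), hμU,
        tsub_self]
    -- The points not covered by translates of `t` form an invariant set meeting `s` in `s \ U`.
    rw [ae_iff]
    refine hs.measure_zero_of_invariant _ (fun g => ?_) (measure_mono_null ?_ hsU)
    · ext x
      simp only [mem_vadd_set_iff_neg_vadd_mem, mem_ofPred_eq, not_exists, vadd_vadd]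
      exact ⟨fun h g' => by simpa using h (g' + g), fun h g' => h _⟩
    · rintro x ⟨hx, hxs⟩
      refine ⟨hxs, fun hxU => ?_⟩
      obtain ⟨g, hg, -⟩ := mem_iUnion.mp hxU
      exact hx ⟨-g, (mem_vadd_set_iff_neg_vadd_mem).mp hg⟩

theorem setLIntegral_le_of_forall_le_vadd (hs : IsAddFundamentalDomain G s μ)
    (ht : IsAddFundamentalDomain G t μ) {f : α → ℝ≥0∞} (hf : ∀ x ∈ s, ∀ g : G, f x ≤ f (g +ᵥ x)) :
    ∫⁻ x in s, f x ∂μ ≤ ∫⁻ x in t, f x ∂μ :=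
  calc ∫⁻ x in s, f x ∂μ = ∑' g : G, ∫⁻ x in s ∩ (g +ᵥ t), f x ∂μ := ht.setLIntegral_eq_tsum f s
    _ ≤ ∑' g : G, ∫⁻ x in (g +ᵥ t) ∩ s, f (-g +ᵥ x) ∂μ := ENNReal.tsum_le_tsum fun g => by
        rw [inter_comm]
        refine lintegral_mono_ae ?_
        filter_upwards [ae_restrict_mem₀ ((ht.nullMeasurableSet_vadd g).inter hs.nullMeasurableSet)]
          with x hx using hf x hx.2 (-g)
    _ = ∫⁻ x in t, f x ∂μ := (hs.setLIntegral_eq_tsum' f t).symm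

end IsAddFundamentalDomain

theorem setIntegral_le_setIntegral_of_setLIntegral_sub_le {α : Type*} [MeasurableSpace α]
    {μ : Measure α} {s t : Set α} {φ : α → ℝ} {c : ℝ} (hφ : AEStronglyMeasurable φ μ)
    (hc : ∀ x, c ≤ φ x) (hst : μ s = μ t) (ht : μ t ≠ ∞) (hφt : IntegrableOn φ t μ)
    (hle : ∫⁻ x in s, ENNReal.ofReal (φ x - c) ∂μ ≤ ∫⁻ x in t, ENNReal.ofReal (φ x - c) ∂μ) :
    ∫ x in s, φ x ∂μ ≤ ∫ x in t, φ x ∂μ := by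
  have hψ : ∀ u, 0 ≤ᵐ[μ.restrict u] fun x => φ x - c :=
    fun u => .of_forall fun x => sub_nonneg.2 (hc x)
  have hψm : ∀ u, AEStronglyMeasurable (fun x => φ x - c) (μ.restrict u) :=
    fun u => (hφ.sub aestronglyMeasurable_const).restrict
  have hsplit : ∀ u, μ u ≠ ∞ → IntegrableOn (fun x => φ x - c) u μ →
      ∫ x in u, φ x ∂μ = (∫⁻ x in u, ENNReal.ofReal (φ x - c) ∂μ).toReal + c * μ.real u := by
    intro u hu hint
    calc ∫ x in u, φ x ∂μ = ∫ x in u, ((φ x - c) + c) ∂μ := by simp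
      _ = (∫⁻ x in u, ENNReal.ofReal (φ x - c) ∂μ).toReal + c * μ.real u := by
        rw [integral_add hint (integrableOn_const hu), integral_eq_lintegral_of_nonneg_ae (hψ u)
          (hψm u), setIntegral_const, smul_eq_mul, mul_comm]
  have hψt : IntegrableOn (fun x => φ x - c) t μ := hφt.sub (integrableOn_const ht)
  have hψt_fin := (hasFiniteIntegral_iff_ofReal (hψ t)).1 hψt.2
  have hψs : IntegrableOn (fun x => φ x - c) s μ :=
    ⟨hψm s, (hasFiniteIntegral_iff_ofReal (hψ s)).2 (hle.trans_lt hψt_fin)⟩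
  rw [hsplit s (hst ▸ ht) hψs, hsplit t ht hψt, measureReal_def, measureReal_def, hst]
  gcongr
  exact hψt_fin.ne

end MeasureTheory

theorem IsCompact.integrableOn_comp_norm_of_monotone {F : Type*} [NormedAddCommGroup F]
    [MeasurableSpace F] [OpensMeasurableSpace F] {μ : Measure F} [IsFiniteMeasureOnCompacts μ]
    {K : Set F} (hK : IsCompact K) {f : ℝ → ℝ} (hf : Monotone f) :
    IntegrableOn (fun x => f ‖x‖) K μ := by
  obtain ⟨R, hR⟩ := hK.isBounded.subset_closedBall 0
  refine Measure.integrableOn_of_bounded hK.measure_lt_top.ne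
    (hf.measurable.comp measurable_norm).aestronglyMeasurable (M := max |f 0| |f R|) ?_
  filter_upwards [ae_restrict_mem hK.measurableSet] with x hx
  exact abs_le_max_abs_abs (hf (norm_nonneg x)) (hf (mem_closedBall_zero_iff.mp (hR hx)))

instance Submodule.vaddInvariantMeasure {R M : Type*} [Ring R] [AddCommGroup M] [Module R M]
    [MeasurableSpace M] [MeasurableAdd M] (μ : Measure M) [μ.IsAddLeftInvariant]
    (L : Submodule R M) : VAddInvariantMeasure L M μ :=
  inferInstanceAs (VAddInvariantMeasure L.toAddSubgroup M μ)

section Voronoi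

variable {F : Type*} [NormedAddCommGroup F] {L : Submodule ℤ F}

theorem norm_le_norm_vadd_of_mem_voronoi {x : F} (hx : x ∈ voronoi L) (γ : L) :
    ‖x‖ ≤ ‖γ +ᵥ x‖ :=
  (hx _ (neg_mem γ.2)).trans_eq <| by rw [← norm_neg, neg_sub, sub_neg_eq_add, add_comm]; rfl

theorem mem_vadd_voronoi_iff {γ : L} {x : F} :
    x ∈ γ +ᵥ voronoi L ↔ ∀ y ∈ L, dist x γ ≤ dist x y := by
  have hγ : ‖-(γ : F) + x‖ = dist x γ := by rw [dist_eq_norm, neg_add_eq_sub]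
  have hy : ∀ y : F, ‖y - (-γ + x)‖ = dist x (y + γ) := fun y => by
    rw [dist_eq_norm, ← norm_neg]; congr 1; abel
  rw [mem_vadd_set_iff_neg_vadd_mem, Submodule.vadd_def, vadd_eq_add, Submodule.coe_neg]
  simp only [voronoi, mem_ofPred_eq, hγ, hy]
  exact ⟨fun h y hy => by simpa using h (y - γ) (sub_mem hy γ.2),
    fun h y hy => h _ (add_mem hy γ.2)⟩

variable (L) in
theorem isClosed_voronoi : IsClosed (voronoi L) := by
  simp only [voronoi, ofPred_forall]
  exact isClosed_biInter fun y _ =>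
    isClosed_le continuous_norm (continuous_const.sub continuous_id).norm

theorem exists_vadd_mem_voronoi [ProperSpace F] (hL : IsClosed (L : Set F)) (x : F) :
    ∃ γ : L, γ +ᵥ x ∈ voronoi L := by
  obtain ⟨z, hz, hdist⟩ := hL.exists_infDist_eq_dist ⟨0, L.zero_mem⟩ x
  refine ⟨-⟨z, hz⟩, mem_vadd_set_iff_neg_vadd_mem.mp <| mem_vadd_voronoi_iff.mpr fun y hy => ?_⟩
  exact hdist ▸ Metric.infDist_le_dist_of_mem hy

variable (L) in
theorem isAddFundamentalDomain_voronoi [InnerProductSpace ℝ F] [FiniteDimensional ℝ F]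
    [MeasurableSpace F] [BorelSpace F] (μ : Measure F) [μ.IsAddHaarMeasure] [DiscreteTopology L] :
    IsAddFundamentalDomain L (voronoi L) μ where
  nullMeasurableSet := (isClosed_voronoi L).measurableSet.nullMeasurableSet
  ae_covers := .of_forall <| exists_vadd_mem_voronoi <|
    AddSubgroup.isClosed_of_discrete (H := L.toAddSubgroup)
  aedisjoint γ γ' hγγ' := by
    refine measure_mono_null (fun x hx => ?_) (Measure.addHaar_affineSubspace μ
      (AffineSubspace.perpBisector (γ : F) γ') (by simpa using hγγ'))
    rw [SetLike.mem_coe, AffineSubspace.mem_perpBisector_iff_dist_eq]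
    exact le_antisymm (mem_vadd_voronoi_iff.mp hx.1 γ' γ'.2) (mem_vadd_voronoi_iff.mp hx.2 γ γ.2)

end Voronoi

section Covolume

variable {F : Type*} [NormedAddCommGroup F] [InnerProductSpace ℝ F] [FiniteDimensional ℝ F]
  [MeasurableSpace F] [BorelSpace F] {ι : Type*} [Fintype ι] [DecidableEq ι]
  (b : Module.Basis ι ℝ F)

theorem volume_parallelepiped_eq_sqrt_det_gram :
    volume (parallelepiped b) = ENNReal.ofReal √(Matrix.gram ℝ b).det := by
  let o := (stdOrthonormalBasis ℝ F).reindex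
    (Fintype.equivFinOfCardEq (Module.finrank_eq_card_basis b).symm).symm
  have hm : (Matrix.of fun i j => o.repr (b j) i) = o.toBasis.toMatrix b := by
    ext i j; simp [Module.Basis.toMatrix_apply]
  rw [← o.addHaar_eq_volume, Measure.addHaar_parallelepiped, Matrix.gram_eq_conjTranspose_mul o,
    hm, Matrix.det_mul, Matrix.det_conjTranspose, Module.Basis.det_apply, star_trivial, ← sq,
    Real.sqrt_sq_eq_abs]

theorem volume_voronoi_span :
    volume (voronoi (Submodule.span ℤ (range b))) = ENNReal.ofReal √(Matrix.gram ℝ b).det := by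
  rw [(isAddFundamentalDomain_voronoi _ volume).measure_eq (ZSpan.isAddFundamentalDomain b volume),
    measure_congr (ZSpan.fundamentalDomain_ae_parallelepiped b volume),
    volume_parallelepiped_eq_sqrt_det_gram]

end Covolume

theorem IsLatticeOfRank.exists_basis [FiniteDimensional ℝ E] {L : Submodule ℤ E} {d : ℕ}
    (hL : IsLatticeOfRank L d) (hd : Module.finrank ℝ E = d) :
    ∃ B : Module.Basis (Fin d) ℝ E, L = Submodule.span ℤ (range B) := by
  obtain ⟨b, hb, rfl⟩ := hL
  exact ⟨basisOfLinearIndependentOfCardEqFinrank' b hb (by simp [hd]),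
    by rw [coe_basisOfLinearIndependentOfCardEqFinrank']⟩

theorem pairwise_aedisjoint_vadd_of_convex {F : Type*} [NormedAddCommGroup F] [NormedSpace ℝ F]
    [FiniteDimensional ℝ F] [MeasurableSpace F] [BorelSpace F] (μ : Measure F)
    [μ.IsAddHaarMeasure] {L : Submodule ℤ F} {K : Set F} (hK : Convex ℝ K)
    (hint : ∀ y ∈ L, y ≠ 0 → interior K ∩ ((fun x => x + y) '' K) = ∅) :
    Pairwise (Function.onFun (AEDisjoint μ) fun γ : L => γ +ᵥ K) := by
  refine Measure.pairwise_aedisjoint_of_aedisjoint_forall_ne_zero (fun γ hγ => ?_)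
    fun γ => (measurePreserving_vadd γ μ).quasiMeasurePreserving
  refine measure_mono_null ?_ (hK.addHaar_frontier μ)
  rintro _ ⟨⟨k, hk, rfl⟩, hkK⟩
  exact ⟨subset_closure hkK, fun hk_int =>
    (hint γ γ.2 (by simpa using hγ)).subset ⟨hk_int, k, hk, add_comm _ _⟩⟩

theorem IsFundBody.isAddFundamentalDomain {n : ℕ}
    {b : Module.Basis (Fin n) ℝ (EuclideanSpace ℝ (Fin n))} {K : Set (EuclideanSpace ℝ (Fin n))}
    (hK : IsFundBody (Submodule.span ℤ (range b) : Set _) K) :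
    IsAddFundamentalDomain (Submodule.span ℤ (range b)) K := by
  obtain ⟨hconv, hcpt, -, hint, hvol⟩ := hK
  refine (isAddFundamentalDomain_voronoi _ volume).of_pairwise_aedisjoint_of_measure_eq
    (by rw [volume_voronoi_span]; exact ENNReal.ofReal_ne_top)
    hcpt.isClosed.measurableSet.nullMeasurableSet
    (pairwise_aedisjoint_vadd_of_convex _ hconv hint) ?_
  rw [volume_voronoi_span, hvol _ ⟨n, b, b.linearIndependent, rfl, rfl⟩, Matrix.gram]

theorem integral_voronoi_le_integral_fundBody_general {n : ℕ}
    (L : Submodule ℤ (EuclideanSpace ℝ (Fin n))) (hL : IsLatticeOfRank L n)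
    (K : Set (EuclideanSpace ℝ (Fin n)))
    (hK : IsFundBody (L : Set (EuclideanSpace ℝ (Fin n))) K)
    (f : ℝ → ℝ) (hf : Monotone f) :
    (∫ x in voronoi L, f ‖x‖) ≤ ∫ x in K, f ‖x‖ := by
  obtain ⟨B, rfl⟩ := hL.exists_basis finrank_euclideanSpace_fin
  have hV := isAddFundamentalDomain_voronoi (Submodule.span ℤ (range B)) volume
  have hKB := hK.isAddFundamentalDomain
  have hKc : IsCompact K := hK.2.1
  refine setIntegral_le_setIntegral_of_setLIntegral_sub_le (c := f 0)
    (hf.measurable.comp measurable_norm).aestronglyMeasurable (fun x => hf (norm_nonneg x))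
    (hV.measure_eq hKB) hKc.measure_lt_top.ne (hKc.integrableOn_comp_norm_of_monotone hf) ?_
  exact hV.setLIntegral_le_of_forall_le_vadd hKB fun x hx γ =>
    ENNReal.ofReal_le_ofReal <| sub_le_sub_right (hf (norm_le_norm_vadd_of_mem_voronoi hx γ)) _

/-- The Voronoi cell minimizes integrals of nondecreasing functions of
the norm among fundamental bodies. -/
theorem integral_voronoi_le_integral_fundBody {n : ℕ}
    (L : Submodule ℤ (EuclideanSpace ℝ (Fin n))) (hL : IsLatticeOfRank L n)
    (K : Set (EuclideanSpace ℝ (Fin n)))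
    (hK : IsFundBody (L : Set (EuclideanSpace ℝ (Fin n))) K)
    (f : ℝ → ℝ) (hf : Monotone f) (hfm : Measurable f) :
    (∫ x in voronoi L, f ‖x‖) ≤ ∫ x in K, f ‖x‖ :=
  integral_voronoi_le_integral_fundBody_general L hL K hK f hf
end
end

section
/- The Voronoi cell of any full-rank lattice L in R^n has normally symmetric facets: for any nonzero lattice vector y, if x satisfies <y',x>/||y'||^2 <= <y,x>/||y||^2 for all nonzero lattice vectors y' (i.e., x lies in the cone of the facet normal to y), then the reflection phi_y(x) = 2<y,x>y/||y||^2 - x also satisfies this condition. -/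
open scoped Real Pointwise
open MeasureTheory Set

noncomputable section

variable {E : Type*} [NormedAddCommGroup E] [InnerProductSpace ℝ E]

/-!
Write `c = ⟪y, x⟫ / ‖y‖²` and measure the facet condition at `z` by the slack
`c ‖z‖² - ⟪z, x⟫`, which is nonnegative exactly when `⟪z, x⟫ / ‖z‖² ≤ c` (for `z ≠ 0`)
and vanishes at `z = 0`. The reflection `φ_y` leaves `c` unchanged, and the slack of `φ_y x`
at `z` equals the slack of `x` at `y - z`. Since `z ↦ y - z` maps the lattice to itself,
the condition for `x` at all lattice points gives it for `φ_y x`.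
-/

def facetSlack (y x z : E) : ℝ := inner ℝ y x / ‖y‖ ^ 2 * ‖z‖ ^ 2 - inner ℝ z x

lemma div_le_iff_facetSlack_nonneg {z : E} (hz : z ≠ 0) (y x : E) :
    inner ℝ z x / ‖z‖ ^ 2 ≤ inner ℝ y x / ‖y‖ ^ 2 ↔ 0 ≤ facetSlack y x z := by
  rw [facetSlack, sub_nonneg, div_le_iff₀ (by positivity)]

lemma facetSlack_zero_right (y x : E) : facetSlack y x 0 = 0 := by
  simp [facetSlack]

lemma facetSlack_reflection (y x z : E) :
    facetSlack y ((2 * inner ℝ y x / ‖y‖ ^ 2) • y - x) z = facetSlack y x (y - z) := by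
  rcases eq_or_ne y 0 with rfl | hy
  · simp [facetSlack]
  simp only [facetSlack, inner_sub_right, inner_sub_left, real_inner_smul_right,
    real_inner_self_eq_norm_sq, norm_sub_sq_real, real_inner_comm y z]
  field_simp
  ring

theorem voronoi_normally_symmetric_facets_general {n : ℕ}
    (L : Submodule ℤ (EuclideanSpace ℝ (Fin n)))
    (y : EuclideanSpace ℝ (Fin n)) (hy : y ∈ L)
    (x : EuclideanSpace ℝ (Fin n))
    (hx : ∀ y' ∈ L, y' ≠ 0 →
      (inner ℝ y' x : ℝ) / ‖y'‖ ^ 2 ≤ (inner ℝ y x : ℝ) / ‖y‖ ^ 2) :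
    ∀ y' ∈ L, y' ≠ 0 →
      (inner ℝ y' ((2 * (inner ℝ y x : ℝ) / ‖y‖ ^ 2) • y - x) : ℝ) / ‖y'‖ ^ 2 ≤
        (inner ℝ y ((2 * (inner ℝ y x : ℝ) / ‖y‖ ^ 2) • y - x) : ℝ) / ‖y‖ ^ 2 := by
  intro z hz hz0
  rw [div_le_iff_facetSlack_nonneg hz0, facetSlack_reflection]
  rcases eq_or_ne (y - z) 0 with hyz | hyz
  · rw [hyz, facetSlack_zero_right]
  · exact (div_le_iff_facetSlack_nonneg hyz y x).1 (hx _ (L.sub_mem hy hz) hyz)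

/-- The Voronoi cell of a lattice has normally symmetric facets. -/
theorem voronoi_normally_symmetric_facets {n : ℕ}
    (L : Submodule ℤ (EuclideanSpace ℝ (Fin n))) (hL : IsLatticeOfRank L n)
    (y : EuclideanSpace ℝ (Fin n)) (hy : y ∈ L) (hy0 : y ≠ 0)
    (x : EuclideanSpace ℝ (Fin n))
    (hx : ∀ y' ∈ L, y' ≠ 0 →
      (inner ℝ y' x : ℝ) / ‖y'‖ ^ 2 ≤ (inner ℝ y x : ℝ) / ‖y‖ ^ 2) :
    ∀ y' ∈ L, y' ≠ 0 →
      (inner ℝ y' ((2 * (inner ℝ y x : ℝ) / ‖y‖ ^ 2) • y - x) : ℝ) / ‖y'‖ ^ 2 ≤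
        (inner ℝ y ((2 * (inner ℝ y x : ℝ) / ‖y‖ ^ 2) • y - x) : ℝ) / ‖y‖ ^ 2 :=
  voronoi_normally_symmetric_facets_general L y hy x hx
end
end
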